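/- arXiv:2311.13136 — 4 statements merged into one kernel-verified Lean document; each statement's English description precedes it below -/
import Mathlib

section
/- Let H be a Hilbert space and suppose u : ℝ → H is a continuously differentiable p-periodic solution (p > 0) of u̇(t) = G(u(t)) where G satisfies the Lipschitz-type estimate ‖G(x) - G(y)‖ ≤ M‖x - y‖ for all x, y in the range of u, with M > 0. If u is non-constant, then p ≥ 4/M. -/
/-- period estimate: Let `H` be a Hilbert space and `u : ℝ → H` a
continuously differentiable `p`-periodic solution (`p > 0`) of `u̇(t) = G(u(t))`, where
`G` satisfies `‖G(x) - G(y)‖ ≤ M‖x - y‖` for all `x, y` in the range of `u`, with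
`M > 0`.  If `u` is non-constant, then `p ≥ 4/M`. -/
theorem stmt_5
    {H : Type*} [NormedAddCommGroup H] [InnerProductSpace ℝ H] [CompleteSpace H]
    (u : ℝ → H) (G : H → H) (p M : ℝ) (hp : 0 < p) (hM : 0 < M)
    (hper : Function.Periodic u p)
    (hderiv : ∀ t, HasDerivAt u (G (u t)) t)
    (hcont : Continuous fun t => G (u t))
    (hLip : ∀ x y, x ∈ Set.range u → y ∈ Set.range u → ‖G x - G y‖ ≤ M * ‖x - y‖)
    (hnonconst : ∃ s t : ℝ, u s ≠ u t) :
    4 / M ≤ p := by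
  set v : ℝ → H := fun t => G (u t) with hv
  have hvint : ∀ a b : ℝ, IntervalIntegrable v MeasureTheory.volume a b :=
    fun a b => hcont.intervalIntegrable a b
  -- FTC: integral of v over [a,b] is u b - u a
  have hftc : ∀ a b : ℝ, ∫ s in a..b, v s = u b - u a := fun a b =>
    intervalIntegral.integral_eq_sub_of_hasDerivAt (fun x _ => hderiv x) (hvint a b)
  -- v is p-periodic
  have hperv : Function.Periodic v p := fun t => by simp only [hv, hper t]
  -- maximum of ‖v‖ on [0,p]
  obtain ⟨t₀, ht₀mem, ht₀⟩ := (isCompact_Icc (a := (0:ℝ)) (b := p)).exists_isMaxOn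
    ⟨0, le_refl 0, hp.le⟩ (hcont.norm.continuousOn)
  set K : ℝ := ‖v t₀‖ with hK
  have hKbound : ∀ t, ‖v t‖ ≤ K := by
    intro t
    obtain ⟨y, hy, hvy⟩ := hperv.exists_mem_Ico₀ hp t
    rw [hvy]
    exact ht₀ ⟨hy.1, hy.2.le⟩
  -- K > 0, else u is constant
  have hKpos : 0 < K := by
    rcases lt_or_eq_of_le (norm_nonneg (v t₀)) with h | h
    · exact h
    · exfalso
      obtain ⟨s, t, hst⟩ := hnonconst
      apply hst
      have h0 : K ≤ 0 := le_of_eq (by rw [hK, ← h])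
      have hz : ∀ t, v t = 0 := fun t =>
        norm_le_zero_iff.mp (le_trans (hKbound t) h0)
      have hd0 : ∀ x, deriv u x = 0 := by
        intro x
        rw [(hderiv x).deriv]
        exact hz x
      exact is_const_of_deriv_eq_zero (fun x => (hderiv x).differentiableAt) hd0 s t
  -- key difference bound: for a ≤ b, ‖v a - v b‖ ≤ M * K * (b - a)
  have hdiff : ∀ a b : ℝ, a ≤ b → ‖v a - v b‖ ≤ M * K * (b - a) := by
    intro a b hab
    have h1 : ‖v a - v b‖ ≤ M * ‖u a - u b‖ :=
      hLip (u a) (u b) ⟨a, rfl⟩ ⟨b, rfl⟩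
    have h2 : ‖u a - u b‖ ≤ K * (b - a) := by
      have he : u a - u b = -(∫ s in a..b, v s) := by rw [hftc a b]; abel
      rw [he, norm_neg]
      have := intervalIntegral.norm_integral_le_of_norm_le_const
        (a := a) (b := b) (C := K) (f := v) (fun x _ => hKbound x)
      rwa [abs_of_nonneg (by linarith)] at this
    calc ‖v a - v b‖ ≤ M * ‖u a - u b‖ := h1
      _ ≤ M * (K * (b - a)) := mul_le_mul_of_nonneg_left h2 hM.le
      _ = M * K * (b - a) := by ring
  -- Main estimate: for any t, p * ‖v t‖ ≤ M * K * p^2 / 4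
  have hmain : ∀ t : ℝ, p * ‖v t‖ ≤ M * K * p ^ 2 / 4 := by
    intro t
    have hzero : (∫ s in t..(t + p), v s) = 0 := by
      rw [hftc, hper t]; simp
    have hsplit : (p : ℝ) • v t = ∫ s in t..(t + p), (v t - v s) := by
      rw [intervalIntegral.integral_sub intervalIntegrable_const (hvint _ _),
        intervalIntegral.integral_const, hzero]
      simp
    have hnorm : p * ‖v t‖ = ‖(p : ℝ) • v t‖ := by
      rw [norm_smul, Real.norm_eq_abs, abs_of_pos hp]
    have hintegrable1 : IntervalIntegrable (fun s => ‖v t - v s‖)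
        MeasureTheory.volume t (t + p / 2) :=
      (Continuous.norm (continuous_const.sub hcont)).intervalIntegrable _ _
    have hintegrable2 : IntervalIntegrable (fun s => ‖v t - v s‖)
        MeasureTheory.volume (t + p / 2) (t + p) :=
      (Continuous.norm (continuous_const.sub hcont)).intervalIntegrable _ _
    have hnormint : ‖∫ s in t..(t + p), (v t - v s)‖ ≤ ∫ s in t..(t + p), ‖v t - v s‖ :=
      intervalIntegral.norm_integral_le_integral_norm (by linarith)
    have hsplitint : (∫ s in t..(t + p), ‖v t - v s‖)
        = (∫ s in t..(t + p / 2), ‖v t - v s‖) + ∫ s in (t + p / 2)..(t + p), ‖v t - v s‖ :=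
      (intervalIntegral.integral_add_adjacent_intervals hintegrable1 hintegrable2).symm
    -- first half bound
    have hb1 : (∫ s in t..(t + p / 2), ‖v t - v s‖)
        ≤ ∫ s in t..(t + p / 2), M * K * (s - t) := by
      apply intervalIntegral.integral_mono_on (by linarith) hintegrable1
        ((continuous_const.mul (continuous_id.sub continuous_const)).intervalIntegrable _ _)
      intro x hx
      exact hdiff t x hx.1
    -- second half bound, using periodicity: v t = v (t + p)
    have hb2 : (∫ s in (t + p / 2)..(t + p), ‖v t - v s‖)
        ≤ ∫ s in (t + p / 2)..(t + p), M * K * (t + p - s) := by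
      apply intervalIntegral.integral_mono_on (by linarith) hintegrable2
        ((continuous_const.mul (continuous_const.sub continuous_id)).intervalIntegrable _ _)
      intro x hx
      rw [show v t = v (t + p) from (hperv t).symm, norm_sub_rev]
      exact hdiff x (t + p) hx.2
    -- compute the two integrals
    have hc1 : (∫ s in t..(t + p / 2), M * K * (s - t)) = M * K * (p ^ 2 / 8) := by
      rw [intervalIntegral.integral_const_mul,
        intervalIntegral.integral_comp_sub_right (fun x => x) t, integral_id]
      ring
    have hc2 : (∫ s in (t + p / 2)..(t + p), M * K * (t + p - s)) = M * K * (p ^ 2 / 8) := by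
      rw [intervalIntegral.integral_const_mul,
        intervalIntegral.integral_comp_sub_left (fun x => x) (t + p), integral_id]
      ring
    calc p * ‖v t‖ = ‖(p : ℝ) • v t‖ := hnorm
      _ = ‖∫ s in t..(t + p), (v t - v s)‖ := by rw [hsplit]
      _ ≤ ∫ s in t..(t + p), ‖v t - v s‖ := hnormint
      _ = (∫ s in t..(t + p / 2), ‖v t - v s‖) + ∫ s in (t + p / 2)..(t + p), ‖v t - v s‖ :=
          hsplitint
      _ ≤ M * K * (p ^ 2 / 8) + M * K * (p ^ 2 / 8) :=
          add_le_add (hb1.trans_eq hc1) (hb2.trans_eq hc2)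
      _ = M * K * p ^ 2 / 4 := by ring
  -- conclude
  have hPK : p * K ≤ M * K * p ^ 2 / 4 := by
    have := hmain t₀
    rwa [← hK] at this
  have h1 : p ≤ M * p ^ 2 / 4 :=
    (mul_le_mul_iff_right₀ hKpos).mp (by nlinarith [hPK])
  rw [div_le_iff₀ hM]
  nlinarith [h1, hp, hM]
end

section
/- (Kuratowski separation) Let X be a metric space, B₀, B₁ ⊆ X two disjoint closed subsets, and K ⊆ X a compact subset with K ∩ B₀ ≠ ∅ ≠ K ∩ B₁. Assume K contains no connected component C with C ∩ B₀ ≠ ∅ ≠ C ∩ B₁. Then there exists a continuous function ψ : X → [0,1] such that B₀ ⊆ ψ⁻¹(0), B₁ ⊆ ψ⁻¹(1), and for some 0 < δ < 1/2, B₀ ∪ B₁ ∪ K ⊆ ψ⁻¹([0, δ) ∪ (1-δ, 1]). -/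
/-!
In the compact space `K` the components form a compact Hausdorff, totally disconnected quotient,
in which the (disjoint) images of `K ∩ B₀` and `K ∩ B₁` are separated by a clopen set. Pulling it
back splits `K` into two disjoint compact pieces `K₀ ⊇ K ∩ B₀` and `K₁ ⊇ K ∩ B₁`, and an Urysohn
function for the closed sets `B₀ ∪ K₀` and `B₁ ∪ K₁` takes only the values `0` and `1` on
`B₀ ∪ B₁ ∪ K`.
-/

open Set

theorem exists_isClopen_superset_disjoint_of_connectedComponent_ne {Y : Type*}
    [TopologicalSpace Y] [CompactSpace Y] [T2Space Y] {A₀ A₁ : Set Y}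
    (hA₀ : IsClosed A₀) (hA₁ : IsClosed A₁)
    (h : ∀ a ∈ A₀, ∀ b ∈ A₁, connectedComponent a ≠ connectedComponent b) :
    ∃ F : Set Y, IsClopen F ∧ A₀ ⊆ F ∧ Disjoint F A₁ := by
  set q : Y → ConnectedComponents Y := ConnectedComponents.mk
  have hZ : IsClosed (q '' A₀) :=
    (hA₀.isCompact.image ConnectedComponents.continuous_coe).isClosed
  have hU : IsOpen (q '' A₁)ᶜ :=
    (hA₁.isCompact.image ConnectedComponents.continuous_coe).isClosed.isOpen_compl
  have hZU : q '' A₀ ⊆ (q '' A₁)ᶜ := by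
    rintro _ ⟨a, ha, rfl⟩ ⟨b, hb, hba⟩
    exact h a ha b hb (ConnectedComponents.coe_eq_coe.1 hba).symm
  obtain ⟨C, hC, hZC, hCU⟩ := exists_clopen_of_closed_subset_open hZ hU hZU
  refine ⟨q ⁻¹' C, hC.preimage ConnectedComponents.continuous_coe,
    image_subset_iff.1 hZC, disjoint_left.2 fun b hb hbA₁ => hCU hb ⟨b, hbA₁, rfl⟩⟩

theorem IsCompact.exists_compact_split_of_connectedComponentIn {X : Type*} [TopologicalSpace X]
    [T2Space X] {B₀ B₁ K : Set X} (hB₀ : IsClosed B₀) (hB₁ : IsClosed B₁) (hK : IsCompact K)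
    (hcomp : ∀ x ∈ K,
      connectedComponentIn K x ∩ B₀ = ∅ ∨ connectedComponentIn K x ∩ B₁ = ∅) :
    ∃ K₀ K₁ : Set X, IsCompact K₀ ∧ IsCompact K₁ ∧ K ⊆ K₀ ∪ K₁ ∧ Disjoint K₀ K₁ ∧
      Disjoint K₀ B₁ ∧ Disjoint K₁ B₀ := by
  have : CompactSpace K := isCompact_iff_compactSpace.1 hK
  have hne : ∀ a ∈ ((↑) : K → X) ⁻¹' B₀, ∀ b ∈ ((↑) : K → X) ⁻¹' B₁,
      connectedComponent a ≠ connectedComponent b := by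
    intro a ha b hb hab
    have hb' : (b : X) ∈ connectedComponentIn K a := by
      rw [connectedComponentIn_eq_image a.2, hab]
      exact mem_image_of_mem _ mem_connectedComponent
    rcases hcomp a a.2 with h | h
    · exact h.subset ⟨mem_connectedComponentIn a.2, ha⟩
    · exact h.subset ⟨hb', hb⟩
  obtain ⟨F, hF, hB₀F, hFB₁⟩ := exists_isClopen_superset_disjoint_of_connectedComponent_ne
    (hB₀.preimage continuous_subtype_val) (hB₁.preimage continuous_subtype_val) hne
  refine ⟨(↑) '' F, (↑) '' Fᶜ, hF.isClosed.isCompact.image continuous_subtype_val,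
    hF.compl.isClosed.isCompact.image continuous_subtype_val, ?_, ?_, ?_, ?_⟩
  · intro x hx
    by_cases hxF : (⟨x, hx⟩ : K) ∈ F
    exacts [Or.inl ⟨_, hxF, rfl⟩, Or.inr ⟨_, hxF, rfl⟩]
  · exact (disjoint_image_iff Subtype.val_injective).2 disjoint_compl_right
  · exact disjoint_image_left.2 hFB₁
  · exact disjoint_image_left.2 (disjoint_compl_left_iff_subset.2 hB₀F)

theorem stmt_7_general
    {X : Type*} [MetricSpace X]
    (B₀ B₁ K : Set X)
    (hB₀ : IsClosed B₀) (hB₁ : IsClosed B₁) (hdisj : Disjoint B₀ B₁)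
    (hK : IsCompact K)
    (hcomp : ∀ x ∈ K,
      connectedComponentIn K x ∩ B₀ = ∅ ∨ connectedComponentIn K x ∩ B₁ = ∅) :
    ∃ ψ : X → ℝ, Continuous ψ ∧ (∀ x, ψ x ∈ Set.Icc (0:ℝ) 1) ∧
      (∀ x ∈ B₀, ψ x = 0) ∧ (∀ x ∈ B₁, ψ x = 1) ∧
      ∃ δ : ℝ, 0 < δ ∧ δ < 1 / 2 ∧
        ∀ x ∈ B₀ ∪ B₁ ∪ K, ψ x < δ ∨ 1 - δ < ψ x := by
  obtain ⟨K₀, K₁, hK₀, hK₁, hKK, hK₀₁, hK₀B₁, hK₁B₀⟩ :=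
    hK.exists_compact_split_of_connectedComponentIn hB₀ hB₁ hcomp
  obtain ⟨f, hf₀, hf₁, hf01⟩ := exists_continuous_zero_one_of_isClosed
    (hB₀.union hK₀.isClosed) (hB₁.union hK₁.isClosed)
    (disjoint_union_left.2 ⟨disjoint_union_right.2 ⟨hdisj, hK₁B₀.symm⟩,
      disjoint_union_right.2 ⟨hK₀B₁, hK₀₁⟩⟩)
  refine ⟨f, f.continuous, hf01, fun x hx => hf₀ (Or.inl hx), fun x hx => hf₁ (Or.inl hx),
    1 / 4, by norm_num, by norm_num, ?_⟩
  rintro x ((hx | hx) | hx)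
  · left; rw [hf₀ (Or.inl hx)]; norm_num
  · right; rw [hf₁ (Or.inl hx)]; norm_num
  · rcases hKK hx with hx | hx
    · left; rw [hf₀ (Or.inr hx)]; norm_num
    · right; rw [hf₁ (Or.inr hx)]; norm_num

/-- Kuratowski separation: Let `X` be a metric space, `B₀, B₁ ⊆ X` two
disjoint closed subsets, and `K ⊆ X` a compact subset meeting both `B₀` and `B₁`.
Assume `K` contains no connected component meeting both `B₀` and `B₁`.  Then there is a
continuous `ψ : X → [0,1]` with `B₀ ⊆ ψ⁻¹(0)`, `B₁ ⊆ ψ⁻¹(1)`, and for some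
`0 < δ < 1/2`, `B₀ ∪ B₁ ∪ K ⊆ ψ⁻¹([0,δ) ∪ (1-δ,1])`. -/
theorem stmt_7
    {X : Type*} [MetricSpace X]
    (B₀ B₁ K : Set X)
    (hB₀ : IsClosed B₀) (hB₁ : IsClosed B₁) (hdisj : Disjoint B₀ B₁)
    (hK : IsCompact K)
    (h₀ : (K ∩ B₀).Nonempty) (h₁ : (K ∩ B₁).Nonempty)
    (hcomp : ∀ x ∈ K,
      connectedComponentIn K x ∩ B₀ = ∅ ∨ connectedComponentIn K x ∩ B₁ = ∅) :
    ∃ ψ : X → ℝ, Continuous ψ ∧ (∀ x, ψ x ∈ Set.Icc (0:ℝ) 1) ∧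
      (∀ x ∈ B₀, ψ x = 0) ∧ (∀ x ∈ B₁, ψ x = 1) ∧
      ∃ δ : ℝ, 0 < δ ∧ δ < 1 / 2 ∧
        ∀ x ∈ B₀ ∪ B₁ ∪ K, ψ x < δ ∨ 1 - δ < ψ x :=
  stmt_7_general B₀ B₁ K hB₀ hB₁ hdisj hK hcomp
end

section
/- Let G be a compact topological group acting continuously by isometries on a Banach space E, and let B₀, B₁ ⊆ E be two G-invariant disjoint closed sets and K ⊆ E a G-invariant compact set with K ∩ B₀ ≠ ∅ ≠ K ∩ B₁. If K contains no connected component C with C ∩ B₀ ≠ ∅ ≠ C ∩ B₁, then there exist two G-invariant disjoint open sets U₀, U₁ ⊆ E such that B₀ ⊆ U₀, B₁ ⊆ U₁, and B₀ ∪ B₁ ∪ K ⊆ U₀ ∪ U₁. -/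
open Set Metric
open scoped Pointwise

/-- In a compact T2 space, a point whose connected component is disjoint from a closed
set `C` can be separated from `C` by a clopen set. -/
lemma exists_isClopen_disjoint_of_connectedComponent
    {X : Type*} [TopologicalSpace X] [T2Space X] [CompactSpace X]
    {C : Set X} (hC : IsClosed C) {b : X} (h : connectedComponent b ∩ C = ∅) :
    ∃ U : Set X, IsClopen U ∧ b ∈ U ∧ U ∩ C = ∅ := by
  rw [connectedComponent_eq_iInter_isClopen b] at h
  have h' : C ∩ ⋂ s : {s : Set X // IsClopen s ∧ b ∈ s}, (s : Set X) = ∅ := by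
    rw [Set.inter_comm]; exact h
  obtain ⟨t, ht⟩ := hC.isCompact.elim_finite_subfamily_closed _
    (fun s : {s : Set X // IsClopen s ∧ b ∈ s} => s.2.1.1) h'
  refine ⟨⋂ i ∈ t, (i : Set X), isClopen_biInter_finset fun i _ => i.2.1,
    Set.mem_iInter₂.2 fun i _ => i.2.2, by rw [Set.inter_comm]; exact ht⟩

/-- equivariant Kuratowski lemma: Let `G` be a compact topological group
acting continuously by isometries on a Banach space `E`, `B₀, B₁ ⊆ E` two `G`-invariant
disjoint closed sets, and `K ⊆ E` a `G`-invariant compact set meeting both.  If `K`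
contains no connected component meeting both `B₀` and `B₁`, then there exist two
`G`-invariant disjoint open sets `U₀, U₁` with `B₀ ⊆ U₀`, `B₁ ⊆ U₁` and
`B₀ ∪ B₁ ∪ K ⊆ U₀ ∪ U₁`. -/
theorem stmt_9
    {G : Type*} [Group G] [TopologicalSpace G] [IsTopologicalGroup G] [CompactSpace G]
    {E : Type*} [NormedAddCommGroup E] [NormedSpace ℝ E] [CompleteSpace E]
    [MulAction G E] [ContinuousSMul G E]
    (hiso : ∀ g : G, Isometry fun x : E => g • x)
    (B₀ B₁ K : Set E)
    (hB₀ : IsClosed B₀) (hB₁ : IsClosed B₁) (hdisj : Disjoint B₀ B₁)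
    (hB₀inv : ∀ g : G, g • B₀ = B₀) (hB₁inv : ∀ g : G, g • B₁ = B₁)
    (hK : IsCompact K) (hKinv : ∀ g : G, g • K = K)
    (h₀ : (K ∩ B₀).Nonempty) (h₁ : (K ∩ B₁).Nonempty)
    (hcomp : ∀ x ∈ K,
      connectedComponentIn K x ∩ B₀ = ∅ ∨ connectedComponentIn K x ∩ B₁ = ∅) :
    ∃ U₀ U₁ : Set E, IsOpen U₀ ∧ IsOpen U₁ ∧ Disjoint U₀ U₁ ∧
      (∀ g : G, g • U₀ = U₀) ∧ (∀ g : G, g • U₁ = U₁) ∧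
      B₀ ⊆ U₀ ∧ B₁ ⊆ U₁ ∧ B₀ ∪ B₁ ∪ K ⊆ U₀ ∪ U₁ := by
  haveI : CompactSpace K := isCompact_iff_compactSpace.mp hK
  -- the traces of B₀, B₁ on the subtype K
  set C₀ : Set K := Subtype.val ⁻¹' B₀ with hC₀def
  set C₁ : Set K := Subtype.val ⁻¹' B₁ with hC₁def
  have hC₀ : IsClosed C₀ := hB₀.preimage continuous_subtype_val
  have hC₁ : IsClosed C₁ := hB₁.preimage continuous_subtype_val
  -- for each point of C₀, the connected component misses C₁
  have hsep : ∀ y : K, y ∈ C₀ → connectedComponent y ∩ C₁ = ∅ := by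
    intro y hy
    have hc := hcomp y.1 y.2
    have hmem : (y : E) ∈ connectedComponentIn K y.1 := mem_connectedComponentIn y.2
    rcases hc with hc | hc
    · exact absurd hc (Set.nonempty_iff_ne_empty.mp ⟨y.1, hmem, hy⟩)
    · ext z
      simp only [Set.mem_inter_iff, Set.mem_empty_iff_false, iff_false, not_and]
      intro hz hz1
      have : (z : E) ∈ connectedComponentIn K y.1 ∩ B₁ := by
        rw [connectedComponentIn_eq_image y.2]
        exact ⟨⟨z, hz, rfl⟩, hz1⟩
      rw [hc] at this; exact this
  -- choose a clopen neighborhood for each point of C₀ avoiding C₁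
  have hchoice : ∀ y : C₀, ∃ U : Set K, IsClopen U ∧ (y : K) ∈ U ∧ U ∩ C₁ = ∅ :=
    fun y => exists_isClopen_disjoint_of_connectedComponent hC₁ (hsep y y.2)
  choose U hUclopen hUmem hUdisj using hchoice
  -- finite subcover of compact C₀
  have hcov : C₀ ⊆ ⋃ y : C₀, U y := fun z hz => Set.mem_iUnion.2 ⟨⟨z, hz⟩, hUmem ⟨z, hz⟩⟩
  obtain ⟨t, ht⟩ := hC₀.isCompact.elim_finite_subcover U (fun y => (hUclopen y).2) hcov
  set V : Set K := ⋃ y ∈ t, U y with hVdef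
  have hVclopen : IsClopen V := isClopen_biUnion_finset fun y _ => hUclopen y
  have hVC₀ : C₀ ⊆ V := ht
  have hVC₁ : V ∩ C₁ = ∅ := by
    apply Set.eq_empty_iff_forall_notMem.2
    rintro z ⟨hzV, hz1⟩
    obtain ⟨y, -, hzy⟩ := Set.mem_iUnion₂.1 hzV
    exact Set.eq_empty_iff_forall_notMem.1 (hUdisj y) z ⟨hzy, hz1⟩
  -- transfer to E
  set V' : Set E := Subtype.val '' V with hV'def
  have hV'K : V' ⊆ K := fun x ⟨z, _, hz⟩ => hz ▸ z.2
  have hV'comp : IsCompact V' := (hVclopen.1.isCompact).image continuous_subtype_val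
  have hV'B₀ : K ∩ B₀ ⊆ V' := fun x ⟨hxK, hxB⟩ => ⟨⟨x, hxK⟩, hVC₀ hxB, rfl⟩
  have hV'B₁ : V' ∩ B₁ = ∅ := by
    apply Set.eq_empty_iff_forall_notMem.2
    rintro x ⟨⟨z, hzV, rfl⟩, hx1⟩
    exact Set.eq_empty_iff_forall_notMem.1 hVC₁ z ⟨hzV, hx1⟩
  -- V open in K: get an open set W of E with V' = K ∩ W
  obtain ⟨W, hWopen, hWeq⟩ := isOpen_induced_iff.1 hVclopen.2
  have hV'W : V' = K ∩ W := by
    rw [hV'def, ← hWeq, Set.image_preimage_eq_inter_range, Subtype.range_coe, Set.inter_comm]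
  -- saturate
  set K₀ : Set E := ⋃ g : G, g • V' with hK₀def
  set W₀ : Set E := ⋃ g : G, g • W with hW₀def
  have hW₀open : IsOpen W₀ := isOpen_iUnion fun g => hWopen.smul g
  have hK₀W₀ : K₀ = K ∩ W₀ := by
    rw [hK₀def, hW₀def, Set.inter_iUnion]
    refine Set.iUnion_congr fun g => ?_
    calc g • V' = g • (K ∩ W) := by rw [hV'W]
      _ = g • K ∩ g • W := Set.smul_set_inter
      _ = K ∩ g • W := by rw [hKinv]
  have hK₀sub : K₀ ⊆ K := fun x hx => by
    obtain ⟨g, hg⟩ := Set.mem_iUnion.1 hx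
    have : g • V' ⊆ K := by
      rw [← hKinv g]; exact Set.smul_set_mono hV'K
    exact this hg
  have hK₀comp : IsCompact K₀ := by
    have : K₀ = (fun p : G × E => p.1 • p.2) '' (Set.univ ×ˢ V') := by
      ext x
      constructor
      · intro hx
        obtain ⟨g, hg⟩ := Set.mem_iUnion.1 hx
        obtain ⟨y, hy, rfl⟩ := hg
        exact ⟨(g, y), ⟨trivial, hy⟩, rfl⟩
      · rintro ⟨⟨g, y⟩, ⟨-, hy⟩, rfl⟩
        exact Set.mem_iUnion.2 ⟨g, Set.smul_mem_smul_set hy⟩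
    rw [this]
    exact (isCompact_univ.prod hV'comp).image continuous_smul
  have hK₀inv : ∀ g : G, g • K₀ = K₀ := by
    intro g
    rw [hK₀def, smul_set_iUnion]
    exact (Equiv.mulLeft g).iSup_congr fun g' => by
      simp [smul_smul, Equiv.mulLeft]
  have hK₀B₀ : K ∩ B₀ ⊆ K₀ := fun x hx =>
    Set.mem_iUnion.2 ⟨1, by rw [one_smul]; exact hV'B₀ hx⟩
  have hK₀B₁ : K₀ ∩ B₁ = ∅ := by
    apply Set.eq_empty_iff_forall_notMem.2
    rintro x ⟨hx0, hx1⟩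
    obtain ⟨g, hg⟩ := Set.mem_iUnion.1 hx0
    obtain ⟨y, hy, rfl⟩ := hg
    have : g • y ∈ g • B₁ := by rw [hB₁inv]; exact hx1
    obtain ⟨y', hy', hyy⟩ := this
    have hyy' : y' = y := smul_left_cancel g hyy
    rw [hyy'] at hy'
    exact Set.eq_empty_iff_forall_notMem.1 hV'B₁ y ⟨hy, hy'⟩
  -- the two closed invariant sets
  set K₁ : Set E := K \ K₀ with hK₁def
  have hK₁closed : IsClosed K₁ := by
    have : K₁ = K \ W₀ := by
      rw [hK₁def, hK₀W₀]
      ext x; simp only [Set.mem_diff, Set.mem_inter_iff]; tauto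
    rw [this]
    exact hK.isClosed.sdiff hW₀open
  have hK₁inv : ∀ g : G, g • K₁ = K₁ := fun g => by
    rw [hK₁def, smul_set_sdiff, hKinv, hK₀inv]
  set A₀ : Set E := B₀ ∪ K₀ with hA₀def
  set A₁ : Set E := B₁ ∪ K₁ with hA₁def
  have hA₀closed : IsClosed A₀ := hB₀.union hK₀comp.isClosed
  have hA₁closed : IsClosed A₁ := hB₁.union hK₁closed
  have hA₀ne : A₀.Nonempty := h₀.imp fun x hx => Or.inl hx.2
  have hA₁ne : A₁.Nonempty := h₁.imp fun x hx => Or.inl hx.2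
  have hA₀inv : ∀ g : G, g • A₀ = A₀ := fun g => by
    rw [hA₀def, Set.smul_set_union, hB₀inv, hK₀inv]
  have hA₁inv : ∀ g : G, g • A₁ = A₁ := fun g => by
    rw [hA₁def, Set.smul_set_union, hB₁inv, hK₁inv]
  have hAdisj : Disjoint A₀ A₁ := by
    rw [Set.disjoint_iff_inter_eq_empty, hA₀def, hA₁def]
    apply Set.eq_empty_iff_forall_notMem.2
    rintro x ⟨hx0 | hx0, hx1 | hx1⟩
    · exact Set.disjoint_left.1 hdisj hx0 hx1
    · exact hx1.2 (hK₀B₀ ⟨hx1.1, hx0⟩)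
    · exact Set.eq_empty_iff_forall_notMem.1 hK₀B₁ x ⟨hx0, hx1⟩
    · exact hx1.2 hx0
  -- invariant distance functions
  have hinf : ∀ (A : Set E), (∀ g : G, g • A = A) → ∀ (g : G) (x : E),
      infDist (g • x) A = infDist x A := by
    intro A hAinv g x
    conv_lhs => rw [← hAinv g]
    have : g • A = (fun y : E => g • y) '' A := rfl
    rw [this, Metric.infDist_image (hiso g)]
  -- the separating open sets
  refine ⟨{x | infDist x A₀ < infDist x A₁}, {x | infDist x A₁ < infDist x A₀},
    isOpen_lt (continuous_infDist_pt A₀) (continuous_infDist_pt A₁),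
    isOpen_lt (continuous_infDist_pt A₁) (continuous_infDist_pt A₀),
    ?_, ?_, ?_, ?_, ?_, ?_⟩
  · rw [Set.disjoint_left]
    intro x hx hx'
    simp only [Set.mem_setOf_eq] at hx hx'
    exact lt_asymm hx hx'
  · intro g
    ext x
    rw [Set.mem_smul_set_iff_inv_smul_mem]
    simp only [Set.mem_setOf_eq, hinf A₀ hA₀inv g⁻¹, hinf A₁ hA₁inv g⁻¹]
  · intro g
    ext x
    rw [Set.mem_smul_set_iff_inv_smul_mem]
    simp only [Set.mem_setOf_eq, hinf A₀ hA₀inv g⁻¹, hinf A₁ hA₁inv g⁻¹]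
  · intro x hx
    have h0 : infDist x A₀ = 0 := infDist_zero_of_mem (Or.inl hx)
    have h1 : 0 < infDist x A₁ :=
      (hA₁closed.notMem_iff_infDist_pos hA₁ne).1 (Set.disjoint_left.1 hAdisj (Or.inl hx))
    simpa [h0] using h1
  · intro x hx
    have h0 : infDist x A₁ = 0 := infDist_zero_of_mem (Or.inl hx)
    have h1 : 0 < infDist x A₀ :=
      (hA₀closed.notMem_iff_infDist_pos hA₀ne).1
        (Set.disjoint_right.1 hAdisj (Or.inl hx))
    simpa [h0] using h1
  · rintro x (hx | hx)
    · rcases hx with hx | hx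
      · left
        have h0 : infDist x A₀ = 0 := infDist_zero_of_mem (Or.inl hx)
        have h1 : 0 < infDist x A₁ :=
          (hA₁closed.notMem_iff_infDist_pos hA₁ne).1 (Set.disjoint_left.1 hAdisj (Or.inl hx))
        simpa [h0] using h1
      · right
        have h0 : infDist x A₁ = 0 := infDist_zero_of_mem (Or.inl hx)
        have h1 : 0 < infDist x A₀ :=
          (hA₀closed.notMem_iff_infDist_pos hA₀ne).1
            (Set.disjoint_right.1 hAdisj (Or.inl hx))
        simpa [h0] using h1
    · by_cases hx0 : x ∈ K₀
      · left
        have h0 : infDist x A₀ = 0 := infDist_zero_of_mem (Or.inr hx0)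
        have h1 : 0 < infDist x A₁ :=
          (hA₁closed.notMem_iff_infDist_pos hA₁ne).1 (Set.disjoint_left.1 hAdisj (Or.inr hx0))
        simpa [h0] using h1
      · right
        have hx1 : x ∈ K₁ := ⟨hx, hx0⟩
        have h0 : infDist x A₁ = 0 := infDist_zero_of_mem (Or.inr hx1)
        have h1 : 0 < infDist x A₀ :=
          (hA₀closed.notMem_iff_infDist_pos hA₀ne).1
            (Set.disjoint_right.1 hAdisj (Or.inr hx1))
        simpa [h0] using h1
end

section
/- Let E be a Banach space, Λ ⊆ ℝ² and suppose 𝓕 : ℝ² × E → E is continuous with 𝓕(λ, 0) = 0 for all λ, and that the Fréchet derivative 𝒜(λ) := D_v𝓕(λ, 0) exists, depends continuously on λ, and satisfies ‖𝓕(λ,v) - 𝒜(λ)v‖/‖v‖ → 0 as (λ,v) → (λ₀, 0). If (λ₀, 0) is a bifurcation point (i.e., there exist nontrivial solutions (λₙ, vₙ) with 𝓕(λₙ, vₙ) = 0, vₙ ≠ 0, λₙ → λ₀, vₙ → 0) and each 𝒜(λ) = Id - K(λ) with K(λ) compact and λ ↦ K(λ) continuous, then 𝒜(λ₀) : E → E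 is not an isomorphism; equivalently Ker 𝒜(λ₀) ≠ {0}. -/
/-!
Normalize the nontrivial solutions, `wₙ = vₙ / ‖vₙ‖`. Dividing `𝓕(λₙ, vₙ) = 0` by `‖vₙ‖` and
using the linearization gives `wₙ - K(λₙ) wₙ → 0`, hence `wₙ - K(λ₀) wₙ → 0` by continuity of
`K`. Compactness of `K(λ₀)` makes `K(λ₀) wₙ` converge along a subsequence, so `wₙ` does too,
to a unit vector `w` with `w = K(λ₀) w`.
-/

open Filter Topology Asymptotics

theorem IsCompactOperator.exists_norm_eq_one_apply_eq_of_tendsto_sub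
    {𝕜 E : Type*} [NontriviallyNormedField 𝕜] [NormedAddCommGroup E] [NormedSpace 𝕜 E]
    {T : E →L[𝕜] E} (hT : IsCompactOperator T) {w : ℕ → E} (hw : ∀ n, ‖w n‖ = 1)
    (hlim : Tendsto (fun n => w n - T (w n)) atTop (𝓝 0)) :
    ∃ v, ‖v‖ = 1 ∧ T v = v := by
  have hmem : ∀ n, T (w n) ∈ closure (T '' Metric.closedBall 0 1) := fun n =>
    subset_closure ⟨w n, mem_closedBall_zero_iff.2 (hw n).le, rfl⟩
  obtain ⟨v, -, φ, hφ, hTv⟩ :=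
    (hT.isCompact_closure_image_closedBall 1).tendsto_subseq hmem
  -- `w = (w - T w) + T w`, and along `φ` both summands converge.
  have hwv : Tendsto (fun n => w (φ n)) atTop (𝓝 v) := by
    simpa using (hlim.comp hφ.tendsto_atTop).add hTv
  refine ⟨v, ?_, ?_⟩
  · exact tendsto_nhds_unique hwv.norm (by simp [hw])
  · exact tendsto_nhds_unique ((T.continuous.tendsto v).comp hwv) hTv

theorem ContinuousLinearMap.tendsto_apply_sub_apply_of_tendsto
    {𝕜 E F ι : Type*} [NontriviallyNormedField 𝕜] [NormedAddCommGroup E] [NormedSpace 𝕜 E]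
    [NormedAddCommGroup F] [NormedSpace 𝕜 F] {l : Filter ι} {T : ι → E →L[𝕜] F} {T₀ : E →L[𝕜] F}
    (hT : Tendsto T l (𝓝 T₀)) {w : ι → E} {C : ℝ} (hw : ∀ i, ‖w i‖ ≤ C) :
    Tendsto (fun i => T i (w i) - T₀ (w i)) l (𝓝 0) := by
  have hnorm : Tendsto (fun i => ‖T i - T₀‖ * C) l (𝓝 0) := by
    simpa using (tendsto_iff_norm_sub_tendsto_zero.1 hT).mul_const C
  exact squeeze_zero_norm (fun i => (T i - T₀).le_opNorm_of_le (hw i)) hnorm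

theorem Asymptotics.IsLittleO.tendsto_inv_norm_smul {α E F : Type*} [NormedAddCommGroup E]
    [NormedSpace ℝ E] [NormedAddCommGroup F] {l : Filter α} {f : α → E} {g : α → F}
    (h : f =o[l] g) : Tendsto (fun x => ‖g x‖⁻¹ • f x) l (𝓝 0) := by
  rw [tendsto_zero_iff_norm_tendsto_zero]
  simpa [norm_smul, div_eq_inv_mul] using h.norm_norm.tendsto_div_nhds_zero

theorem isLittleO_sub_apply_of_eq_zero {ι Λ E : Type*} [PseudoMetricSpace Λ]
    [NormedAddCommGroup E] [NormedSpace ℝ E] {F : Λ × E → E} {K : Λ → E →L[ℝ] E} {lam₀ : Λ}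
    (hlin : ∀ ε > (0:ℝ), ∃ δ > (0:ℝ), ∀ (lam : Λ) (v : E),
      dist lam lam₀ < δ → v ≠ 0 → ‖v‖ < δ → ‖F (lam, v) - (v - K lam v)‖ ≤ ε * ‖v‖)
    {l : Filter ι} {lam : ι → Λ} {v : ι → E} (hsol : ∀ i, F (lam i, v i) = 0)
    (hne : ∀ i, v i ≠ 0) (hlam : Tendsto lam l (𝓝 lam₀)) (hv : Tendsto v l (𝓝 0)) :
    (fun i => v i - K (lam i) (v i)) =o[l] v := by
  refine IsLittleO.of_bound fun ε hε => ?_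
  obtain ⟨δ, hδ, hbound⟩ := hlin ε hε
  filter_upwards [Metric.tendsto_nhds.1 hlam δ hδ, hv.norm.eventually (gt_mem_nhds (by simpa))]
    with i hlam_i hv_i
  simpa [hsol i, norm_sub_rev] using hbound (lam i) (v i) hlam_i (hne i) hv_i

theorem stmt_17_general
    {E : Type*} [NormedAddCommGroup E] [NormedSpace ℝ E]
    (F : (ℝ × ℝ) × E → E)
    (K : (ℝ × ℝ) → E →L[ℝ] E)
    (hKcomp : ∀ lam, IsCompactOperator (K lam))
    (hKcont : Continuous K)
    (lam₀ : ℝ × ℝ)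
    (hlin : ∀ ε > (0:ℝ), ∃ δ > (0:ℝ), ∀ (lam : ℝ × ℝ) (v : E),
      dist lam lam₀ < δ → v ≠ 0 → ‖v‖ < δ →
        ‖F (lam, v) - (v - K lam v)‖ ≤ ε * ‖v‖)
    (lamSeq : ℕ → ℝ × ℝ) (vSeq : ℕ → E)
    (hsol : ∀ n, F (lamSeq n, vSeq n) = 0)
    (hne : ∀ n, vSeq n ≠ 0)
    (hlamlim : Filter.Tendsto lamSeq Filter.atTop (nhds lam₀))
    (hvlim : Filter.Tendsto vSeq Filter.atTop (nhds 0)) :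
    ∃ w : E, w ≠ 0 ∧ w - K lam₀ w = 0 := by
  set w : ℕ → E := fun n => ‖vSeq n‖⁻¹ • vSeq n
  have hw : ∀ n, ‖w n‖ = 1 := fun n => norm_smul_inv_norm (hne n)
  have hlinearized : Tendsto (fun n => w n - K (lamSeq n) (w n)) atTop (𝓝 0) := by
    simpa [w, smul_sub] using
      (isLittleO_sub_apply_of_eq_zero hlin hsol hne hlamlim hvlim).tendsto_inv_norm_smul
  have hKw : Tendsto (fun n => K (lamSeq n) (w n) - K lam₀ (w n)) atTop (𝓝 0) :=
    ContinuousLinearMap.tendsto_apply_sub_apply_of_tendsto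
      ((hKcont.tendsto lam₀).comp hlamlim) (fun n => (hw n).le)
  obtain ⟨v, hv_norm, hv_fixed⟩ :=
    (hKcomp lam₀).exists_norm_eq_one_apply_eq_of_tendsto_sub hw
      (by simpa using hlinearized.add hKw)
  exact ⟨v, norm_ne_zero_iff.1 (by simp [hv_norm]), sub_eq_zero.2 hv_fixed.symm⟩

/-- necessary condition for bifurcation: Let `E` be a Banach space and
`𝓕 : ℝ² × E → E` continuous with `𝓕(λ, 0) = 0`, whose derivative at `0`,
`𝒜(λ) = Id - K(λ)` with `K(λ)` compact and `λ ↦ K(λ)` continuous, satisfies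
`‖𝓕(λ,v) - 𝒜(λ)v‖/‖v‖ → 0` as `(λ, v) → (λ₀, 0)`.  If `(λ₀, 0)` is a bifurcation
point (there are nontrivial solutions `(λₙ, vₙ)` with `𝓕(λₙ,vₙ)=0`, `vₙ ≠ 0`,
`λₙ → λ₀`, `vₙ → 0`), then `𝒜(λ₀)` is not an isomorphism: `Ker 𝒜(λ₀) ≠ {0}`. -/
theorem stmt_17
    {E : Type*} [NormedAddCommGroup E] [NormedSpace ℝ E] [CompleteSpace E]
    (F : (ℝ × ℝ) × E → E) (hFcont : Continuous F)
    (hFzero : ∀ lam : ℝ × ℝ, F (lam, 0) = 0)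
    (K : (ℝ × ℝ) → E →L[ℝ] E)
    (hKcomp : ∀ lam, IsCompactOperator (K lam))
    (hKcont : Continuous K)
    (lam₀ : ℝ × ℝ)
    (hlin : ∀ ε > (0:ℝ), ∃ δ > (0:ℝ), ∀ (lam : ℝ × ℝ) (v : E),
      dist lam lam₀ < δ → v ≠ 0 → ‖v‖ < δ →
        ‖F (lam, v) - (v - K lam v)‖ ≤ ε * ‖v‖)
    (lamSeq : ℕ → ℝ × ℝ) (vSeq : ℕ → E)
    (hsol : ∀ n, F (lamSeq n, vSeq n) = 0)
    (hne : ∀ n, vSeq n ≠ 0)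
    (hlamlim : Filter.Tendsto lamSeq Filter.atTop (nhds lam₀))
    (hvlim : Filter.Tendsto vSeq Filter.atTop (nhds 0)) :
    ∃ w : E, w ≠ 0 ∧ w - K lam₀ w = 0 :=
  stmt_17_general F K hKcomp hKcont lam₀ hlin lamSeq vSeq hsol hne hlamlim hvlim
end
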